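/- arXiv:1310.0418 — 6 statements merged into one kernel-verified Lean document; each statement's English description precedes it below -/
import Mathlib

section
/- Let I ⊆ ℝ be an open interval and let y : I → ℝ be four times continuously differentiable. Then y satisfies the ODE x·y·y'''' + (4x·y' + 3y)·y''' + 3x·(y'')² + 9·y'·y'' = 0 at every x ∈ I if and only if there exist real constants c₀, c₁, c₂ such that x·y(x)·y'(x) = c₀ + c₁·x + c₂·x² for all x ∈ I. -/
/-!
For `y` of class `C⁴` the left-hand side of the equation is the third derivative of
`u = x y y'`, so the equation says `u''' = 0` on `I`. On an open interval a function whose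
`n`-th derivative vanishes is a polynomial of degree `< n`, by integrating `n` times with the
mean value theorem.
-/

open Set

lemma hasDerivAt_sum_pow {n : ℕ} (c : Fin (n + 1) → ℝ) (x : ℝ) :
    HasDerivAt (fun t => ∑ i, c i * t ^ (i : ℕ))
      (∑ i : Fin n, ((i : ℕ) + 1) * c i.succ * x ^ (i : ℕ)) x := by
  have hsplit : (fun t => ∑ i, c i * t ^ (i : ℕ)) =
      fun t => c 0 + ∑ i : Fin n, c i.succ * t ^ ((i : ℕ) + 1) := by
    ext t; simp [Fin.sum_univ_succ]
  rw [hsplit]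
  refine ((hasDerivAt_const x (c 0)).fun_add (HasDerivAt.fun_sum fun (i : Fin n) _ =>
    (hasDerivAt_pow ((i : ℕ) + 1) x).const_mul (c i.succ))).congr_deriv ?_
  simp only [zero_add, add_tsub_cancel_right, Nat.cast_add, Nat.cast_one]
  exact Finset.sum_congr rfl fun i _ => by ring

lemma IsOpen.exists_eqOn_sum_pow_iff_deriv {I : Set ℝ} (hI : IsOpen I) (hI' : IsPreconnected I)
    {f : ℝ → ℝ} (hf : DifferentiableOn ℝ f I) {n : ℕ} :
    (∃ c : Fin (n + 1) → ℝ, EqOn f (fun x => ∑ i, c i * x ^ (i : ℕ)) I) ↔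
      ∃ c : Fin n → ℝ, EqOn (deriv f) (fun x => ∑ i, c i * x ^ (i : ℕ)) I := by
  constructor
  · rintro ⟨c, hc⟩
    exact ⟨fun i => ((i : ℕ) + 1) * c i.succ, fun x hx =>
      (hc.deriv hI hx).trans (hasDerivAt_sum_pow c x).deriv⟩
  · rintro ⟨c, hc⟩
    set d : Fin (n + 1) → ℝ := Fin.cons 0 fun i => c i / ((i : ℕ) + 1) with hd
    have hderiv : EqOn (deriv f) (deriv fun x => ∑ i, d i * x ^ (i : ℕ)) I := fun x hx => by
      rw [hc hx, (hasDerivAt_sum_pow d x).deriv]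
      refine Finset.sum_congr rfl fun i _ => ?_
      simp only [hd, Fin.cons_succ]
      field_simp
    obtain ⟨a, ha⟩ := hI.exists_eq_add_of_deriv_eq hI' hf
      (fun x _ => (hasDerivAt_sum_pow d x).differentiableAt.differentiableWithinAt) hderiv
    refine ⟨Fin.cons a fun i => c i / ((i : ℕ) + 1), fun x hx => ?_⟩
    simp [ha hx, hd, Fin.sum_univ_succ, add_comm]

lemma IsOpen.iteratedDeriv_eqOn_zero_iff {I : Set ℝ} (hI : IsOpen I) (hI' : IsPreconnected I)
    {n : ℕ} {f : ℝ → ℝ} (hf : ContDiffOn ℝ n f I) :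
    EqOn (iteratedDeriv n f) 0 I ↔ ∃ c : Fin n → ℝ, EqOn f (fun x => ∑ i, c i * x ^ (i : ℕ)) I := by
  induction n generalizing f with
  | zero => simp [EqOn]
  | succ n ih =>
    rw [iteratedDeriv_succ', ih (hf.deriv_of_isOpen hI (by norm_cast)),
      hI.exists_eqOn_sum_pow_iff_deriv hI' (hf.differentiableOn (by simp))]

lemma ContDiffOn.hasDerivAt_iterate_deriv {I : Set ℝ} (hI : IsOpen I) {n : ℕ} {f : ℝ → ℝ}
    (hf : ContDiffOn ℝ n f I) {k : ℕ} (hk : k < n) {x : ℝ} (hx : x ∈ I) :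
    HasDerivAt (deriv^[k] f) (deriv^[k + 1] f x) x := by
  have hd : DifferentiableOn ℝ (deriv^[k] f) I :=
    (hf.differentiableOn_iteratedDerivWithin (by exact_mod_cast hk) hI.uniqueDiffOn).congr
      fun z hz => (iteratedDerivWithin_of_isOpen_eq_iterate hI hz).symm
  rw [Function.iterate_succ_apply']
  exact (hd.differentiableAt (hI.mem_nhds hx)).hasDerivAt

lemma IsOpen.eqOn_iteratedDeriv_three_of_hasDerivAt {I : Set ℝ} (hI : IsOpen I)
    {f f₁ f₂ f₃ : ℝ → ℝ} (h₁ : ∀ x ∈ I, HasDerivAt f (f₁ x) x)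
    (h₂ : ∀ x ∈ I, HasDerivAt f₁ (f₂ x) x) (h₃ : ∀ x ∈ I, HasDerivAt f₂ (f₃ x) x) :
    EqOn (iteratedDeriv 3 f) f₃ I := by
  have e₁ : EqOn (deriv f) f₁ I := fun x hx => (h₁ x hx).deriv
  have e₂ : EqOn (deriv (deriv f)) f₂ I := fun x hx => (e₁.deriv hI hx).trans (h₂ x hx).deriv
  intro x hx
  rw [iteratedDeriv_eq_iterate]
  exact (e₂.deriv hI hx).trans (h₃ x hx).deriv

lemma iteratedDeriv_three_mul_deriv_eqOn {I : Set ℝ} (hI : IsOpen I) {y : ℝ → ℝ}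
    (hy : ContDiffOn ℝ 4 y I) :
    EqOn (iteratedDeriv 3 fun t => t * y t * deriv y t)
      (fun x => x * y x * deriv (deriv (deriv (deriv y))) x
        + (4 * x * deriv y x + 3 * y x) * deriv (deriv (deriv y)) x
        + 3 * x * (deriv (deriv y) x) ^ 2
        + 9 * deriv y x * deriv (deriv y) x) I := by
  have h0 : ∀ x ∈ I, HasDerivAt y (deriv y x) x := fun x hx => by
    simpa using hy.hasDerivAt_iterate_deriv hI (k := 0) (by norm_num) hx
  have h1 : ∀ x ∈ I, HasDerivAt (deriv y) (deriv (deriv y) x) x := fun x hx => by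
    simpa using hy.hasDerivAt_iterate_deriv hI (k := 1) (by norm_num) hx
  have h2 : ∀ x ∈ I, HasDerivAt (deriv (deriv y)) (deriv (deriv (deriv y)) x) x := fun x hx => by
    simpa using hy.hasDerivAt_iterate_deriv hI (k := 2) (by norm_num) hx
  have h3 : ∀ x ∈ I, HasDerivAt (deriv (deriv (deriv y)))
      (deriv (deriv (deriv (deriv y))) x) x := fun x hx => by
    simpa using hy.hasDerivAt_iterate_deriv hI (k := 3) (by norm_num) hx
  have hu' : ∀ x ∈ I, HasDerivAt (fun t => t * y t * deriv y t)
      (y x * deriv y x + x * deriv y x ^ 2 + x * y x * deriv (deriv y) x) x := fun x hx =>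
    (((hasDerivAt_id' x).fun_mul (h0 x hx)).fun_mul (h1 x hx)).congr_deriv (by ring)
  have hu'' : ∀ x ∈ I, HasDerivAt
      (fun t => y t * deriv y t + t * deriv y t ^ 2 + t * y t * deriv (deriv y) t)
      (2 * deriv y x ^ 2 + 2 * y x * deriv (deriv y) x
        + 3 * x * deriv y x * deriv (deriv y) x + x * y x * deriv (deriv (deriv y)) x) x :=
    fun x hx => ((((h0 x hx).fun_mul (h1 x hx)).fun_add
      ((hasDerivAt_id' x).fun_mul ((h1 x hx).fun_pow 2))).fun_add
      (((hasDerivAt_id' x).fun_mul (h0 x hx)).fun_mul (h2 x hx))).congr_deriv (by ring)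
  have hu''' : ∀ x ∈ I, HasDerivAt
      (fun t => 2 * deriv y t ^ 2 + 2 * y t * deriv (deriv y) t
        + 3 * t * deriv y t * deriv (deriv y) t + t * y t * deriv (deriv (deriv y)) t)
      (x * y x * deriv (deriv (deriv (deriv y))) x
        + (4 * x * deriv y x + 3 * y x) * deriv (deriv (deriv y)) x
        + 3 * x * (deriv (deriv y) x) ^ 2
        + 9 * deriv y x * deriv (deriv y) x) x :=
    fun x hx => (((((hasDerivAt_const x 2).fun_mul ((h1 x hx).fun_pow 2)).fun_add
      (((hasDerivAt_const x 2).fun_mul (h0 x hx)).fun_mul (h2 x hx))).fun_add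
      ((((hasDerivAt_const x 3).fun_mul (hasDerivAt_id' x)).fun_mul (h1 x hx)).fun_mul
        (h2 x hx))).fun_add
      (((hasDerivAt_id' x).fun_mul (h0 x hx)).fun_mul (h3 x hx))).congr_deriv (by ring)
  exact hI.eqOn_iteratedDeriv_three_of_hasDerivAt hu' hu'' hu'''

/-- Example 1 of the paper: a `C⁴` function `y` on an open interval `I` satisfies
`x y y'''' + (4 x y' + 3 y) y''' + 3 x (y'')² + 9 y' y'' = 0` on `I` iff
`x y y'` is a quadratic polynomial on `I`. -/
theorem stmt_1 (I : Set ℝ) (hI : IsOpen I) (hIconn : IsPreconnected I)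
    (y : ℝ → ℝ) (hy : ContDiffOn ℝ 4 y I) :
    (∀ x ∈ I,
        x * y x * deriv (deriv (deriv (deriv y))) x
          + (4 * x * deriv y x + 3 * y x) * deriv (deriv (deriv y)) x
          + 3 * x * (deriv (deriv y) x) ^ 2
          + 9 * deriv y x * deriv (deriv y) x = 0)
      ↔ ∃ c₀ c₁ c₂ : ℝ, ∀ x ∈ I,
          x * y x * deriv y x = c₀ + c₁ * x + c₂ * x ^ 2 := by
  have hu : ContDiffOn ℝ 3 (fun t => t * y t * deriv y t) I :=
    (contDiffOn_id.mul (hy.of_le (by norm_num))).mul (hy.deriv_of_isOpen hI (by norm_num))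
  have hquad := hI.iteratedDeriv_eqOn_zero_iff hIconn hu
  have hode := iteratedDeriv_three_mul_deriv_eqOn hI hy
  constructor
  · intro h
    obtain ⟨c, hc⟩ := hquad.1 fun x hx => (hode hx).trans (h x hx)
    exact ⟨c 0, c 1, c 2, fun x hx => by simpa [Fin.sum_univ_three] using hc hx⟩
  · rintro ⟨c₀, c₁, c₂, hc⟩ x hx
    exact (hode hx).symm.trans
      (hquad.2 ⟨![c₀, c₁, c₂], fun z hz => by simp [Fin.sum_univ_three, hc z hz]⟩ hx)
end

section
/- Let I ⊆ (0,∞) be an open interval and let y : I → ℝ be four times continuously differentiable. Then y satisfies the ODE x·y·y'''' + (4x·y' + 3y)·y''' + 3x·(y'')² + 9·y'·y'' = 0 at every x ∈ I if and only if there exist real constants a, b, c, d such that y(x)² = a·ln x + b·x + c·x² + d for all x ∈ I. -/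
/-! The left-hand side of the equation is the third derivative of `u = x y y'`, so the equation
holds on the interval iff `u` is a quadratic polynomial there. As `2 y y' = (y²)'`, this says
`(y²)' = a / x + b + 2 c x`, and integrating once more gives `y² = a log x + b x + c x² + d`. -/

open Filter Topology

section

variable {𝕜 G : Type*} [RCLike 𝕜] [NormedAddCommGroup G] [NormedSpace 𝕜 G] {I : Set 𝕜}

theorem IsOpen.exists_eq_add_of_hasDerivAt (hI : IsOpen I) (hI' : IsPreconnected I)
    {f g f' : 𝕜 → G} (hf : ∀ x ∈ I, HasDerivAt f (f' x) x) (hg : ∀ x ∈ I, HasDerivAt g (f' x) x) :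
    ∃ c, ∀ x ∈ I, f x = g x + c :=
  hI.exists_eq_add_of_deriv_eq hI' (fun x hx => (hf x hx).differentiableAt.differentiableWithinAt)
    (fun x hx => (hg x hx).differentiableAt.differentiableWithinAt)
    fun x hx => (hf x hx).deriv.trans (hg x hx).deriv.symm

theorem IsOpen.deriv_eventuallyEq_of_hasDerivAt (hI : IsOpen I) {f f' : 𝕜 → G}
    (hf : ∀ x ∈ I, HasDerivAt f (f' x) x) {x : 𝕜} (hx : x ∈ I) : deriv f =ᶠ[𝓝 x] f' :=
  eventually_of_mem (hI.mem_nhds hx) fun z hz => (hf z hz).deriv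

theorem IsOpen.deriv_deriv_deriv_eq_of_hasDerivAt (hI : IsOpen I) {f f₁ f₂ f₃ : 𝕜 → G}
    (h₀ : ∀ x ∈ I, HasDerivAt f (f₁ x) x) (h₁ : ∀ x ∈ I, HasDerivAt f₁ (f₂ x) x)
    (h₂ : ∀ x ∈ I, HasDerivAt f₂ (f₃ x) x) {x : 𝕜} (hx : x ∈ I) :
    deriv (deriv (deriv f)) x = f₃ x :=
  calc deriv (deriv (deriv f)) x = deriv (deriv f₁) x :=
        (hI.deriv_eventuallyEq_of_hasDerivAt h₀ hx).deriv.deriv_eq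
    _ = deriv f₂ x := (hI.deriv_eventuallyEq_of_hasDerivAt h₁ hx).deriv_eq
    _ = f₃ x := (h₂ x hx).deriv

theorem ContDiffOn.hasDerivAt_of_isOpen {n : WithTop ℕ∞} {f : 𝕜 → G} (hf : ContDiffOn 𝕜 n f I)
    (hI : IsOpen I) (hn : n ≠ 0) {x : 𝕜} (hx : x ∈ I) : HasDerivAt f (deriv f x) x :=
  ((hf.differentiableOn hn).differentiableAt (hI.mem_nhds hx)).hasDerivAt

end

variable {I : Set ℝ}

theorem deriv_deriv_deriv_mul_mul_eq (hI : IsOpen I) {y y₁ y₂ y₃ y₄ : ℝ → ℝ}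
    (h₀ : ∀ x ∈ I, HasDerivAt y (y₁ x) x) (h₁ : ∀ x ∈ I, HasDerivAt y₁ (y₂ x) x)
    (h₂ : ∀ x ∈ I, HasDerivAt y₂ (y₃ x) x) (h₃ : ∀ x ∈ I, HasDerivAt y₃ (y₄ x) x)
    {x : ℝ} (hx : x ∈ I) :
    deriv (deriv (deriv fun t => t * y t * y₁ t)) x
      = x * y x * y₄ x + (4 * x * y₁ x + 3 * y x) * y₃ x + 3 * x * y₂ x ^ 2
        + 9 * y₁ x * y₂ x := by
  refine hI.deriv_deriv_deriv_eq_of_hasDerivAt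
    (f₁ := fun t => y t * y₁ t + t * y₁ t ^ 2 + t * y t * y₂ t)
    (f₂ := fun t => 2 * y₁ t ^ 2 + 2 * y t * y₂ t + 3 * t * y₁ t * y₂ t + t * y t * y₃ t)
    (f₃ := fun t => t * y t * y₄ t + (4 * t * y₁ t + 3 * y t) * y₃ t + 3 * t * y₂ t ^ 2
      + 9 * y₁ t * y₂ t)
    (fun t ht => ?_) (fun t ht => ?_) (fun t ht => ?_) hx
  · exact (((hasDerivAt_id' t).mul (h₀ t ht)).mul (h₁ t ht)).congr_deriv
      (by simp only [Pi.mul_apply]; ring)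
  · exact ((((h₀ t ht).mul (h₁ t ht)).add ((hasDerivAt_id' t).mul ((h₁ t ht).pow 2))).add
      (((hasDerivAt_id' t).mul (h₀ t ht)).mul (h₂ t ht))).congr_deriv
      (by simp only [Pi.mul_apply, Pi.pow_apply]; push_cast; ring)
  · exact (((((h₁ t ht).pow 2).const_mul 2).add (((h₀ t ht).const_mul 2).mul (h₂ t ht))).add
      ((((hasDerivAt_id' t).const_mul 3).mul (h₁ t ht)).mul (h₂ t ht)) |>.add
      (((hasDerivAt_id' t).mul (h₀ t ht)).mul (h₃ t ht))).congr_deriv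
      (by simp only [Pi.mul_apply]; push_cast; ring)

theorem deriv_deriv_deriv_eq_zero_iff_exists_quadratic (hI : IsOpen I) (hI' : IsPreconnected I)
    {f : ℝ → ℝ} (hf : ContDiffOn ℝ 3 f I) :
    (∀ x ∈ I, deriv (deriv (deriv f)) x = 0) ↔
      ∃ A B C : ℝ, ∀ x ∈ I, f x = A + B * x + C * x ^ 2 := by
  constructor
  · intro h
    have hf₁ : ContDiffOn ℝ 2 (deriv f) I := hf.deriv_of_isOpen hI (by norm_num)
    have hf₂ : ContDiffOn ℝ 1 (deriv (deriv f)) I := hf₁.deriv_of_isOpen hI (by norm_num)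
    obtain ⟨C, hC⟩ := hI.exists_eq_add_of_hasDerivAt hI' (f' := fun _ => 0)
      (fun x hx => h x hx ▸ hf₂.hasDerivAt_of_isOpen hI one_ne_zero hx)
      (fun x _ => hasDerivAt_const x 0)
    obtain ⟨B, hB⟩ := hI.exists_eq_add_of_hasDerivAt hI' (f' := fun _ => C)
      (fun x hx => (hf₁.hasDerivAt_of_isOpen hI two_ne_zero hx).congr_deriv (by simp [hC x hx]))
      (fun x _ => ((hasDerivAt_id' x).const_mul C).congr_deriv (mul_one C))
    obtain ⟨A, hA⟩ := hI.exists_eq_add_of_hasDerivAt hI' (f' := fun x => C * x + B)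
      (g := fun x => C / 2 * x ^ 2 + B * x)
      (fun x hx => (hf.hasDerivAt_of_isOpen hI three_ne_zero hx).congr_deriv (hB x hx))
      (fun x _ => (((hasDerivAt_pow 2 x).const_mul (C / 2)).add
        ((hasDerivAt_id' x).const_mul B)).congr_deriv (by push_cast; ring))
    exact ⟨A, B, C / 2, fun x hx => by rw [hA x hx]; ring⟩
  · rintro ⟨A, B, C, hq⟩ x hx
    refine hI.deriv_deriv_deriv_eq_of_hasDerivAt (f₁ := fun t => B + 2 * C * t)
      (f₂ := fun _ => 2 * C) (fun t ht => ?_) (fun t _ => ?_) (fun t _ => hasDerivAt_const t _) hx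
    · refine HasDerivAt.congr_of_eventuallyEq ?_ (eventually_of_mem (hI.mem_nhds ht) hq)
      exact (((hasDerivAt_id' t).const_mul B).const_add A |>.add
        ((hasDerivAt_pow 2 t).const_mul C)).congr_deriv (by push_cast; ring)
    · exact (((hasDerivAt_id' t).const_mul (2 * C)).const_add B).congr_deriv (mul_one _)

theorem exists_quadratic_mul_mul_deriv_iff_exists_sq_eq (hI : IsOpen I) (hI' : IsPreconnected I)
    (hIpos : I ⊆ Set.Ioi 0) {y y' : ℝ → ℝ} (hy : ∀ x ∈ I, HasDerivAt y (y' x) x) :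
    (∃ A B C : ℝ, ∀ x ∈ I, x * y x * y' x = A + B * x + C * x ^ 2) ↔
      ∃ a b c d : ℝ, ∀ x ∈ I, y x ^ 2 = a * Real.log x + b * x + c * x ^ 2 + d := by
  have hsq (x) (hx : x ∈ I) : HasDerivAt (fun t => y t ^ 2) (2 * y x * y' x) x :=
    ((hy x hx).pow 2).congr_deriv (by push_cast; ring)
  have hlog (a b c d x : ℝ) (hx : 0 < x) :
      HasDerivAt (fun t => a * Real.log t + b * t + c * t ^ 2 + d) (a / x + b + 2 * c * x) x :=
    ((((Real.hasDerivAt_log hx.ne').const_mul a).add ((hasDerivAt_id' x).const_mul b)).add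
      ((hasDerivAt_pow 2 x).const_mul c) |>.add_const d).congr_deriv (by push_cast; ring)
  constructor
  · rintro ⟨A, B, C, hu⟩
    obtain ⟨d, hd⟩ := hI.exists_eq_add_of_hasDerivAt hI' hsq fun x hx =>
      (hlog (2 * A) (2 * B) C 0 x (hIpos hx)).congr_deriv (by
        have hx0 : x ≠ 0 := (hIpos hx).ne'
        field_simp
        linear_combination -hu x hx)
    exact ⟨2 * A, 2 * B, C, d, fun x hx => by rw [hd x hx]; ring⟩
  · rintro ⟨a, b, c, d, h⟩
    refine ⟨a / 2, b / 2, c, fun x hx => ?_⟩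
    have hx0 : x ≠ 0 := (hIpos hx).ne'
    have := (hsq x hx).unique <|
      (hlog a b c d x (hIpos hx)).congr_of_eventuallyEq (eventually_of_mem (hI.mem_nhds hx) h)
    field_simp at this
    linear_combination this / 2

/-- Example 1 of the paper, integrated form: for a `C⁴` function `y` on an open interval
`I ⊆ (0,∞)`, the ODE `x y y'''' + (4 x y' + 3 y) y''' + 3 x (y'')² + 9 y' y'' = 0` holds on `I`
iff `y² = a ln x + b x + c x² + d` on `I` for some constants `a, b, c, d`. -/
theorem stmt_2 (I : Set ℝ) (hI : IsOpen I) (hIconn : IsPreconnected I)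
    (hIpos : I ⊆ Set.Ioi (0 : ℝ))
    (y : ℝ → ℝ) (hy : ContDiffOn ℝ 4 y I) :
    (∀ x ∈ I,
        x * y x * deriv (deriv (deriv (deriv y))) x
          + (4 * x * deriv y x + 3 * y x) * deriv (deriv (deriv y)) x
          + 3 * x * (deriv (deriv y) x) ^ 2
          + 9 * deriv y x * deriv (deriv y) x = 0)
      ↔ ∃ a b c d : ℝ, ∀ x ∈ I,
          (y x) ^ 2 = a * Real.log x + b * x + c * x ^ 2 + d := by
  have hy₁ : ContDiffOn ℝ 3 (deriv y) I := hy.deriv_of_isOpen hI (by norm_num)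
  have hy₂ : ContDiffOn ℝ 2 (deriv (deriv y)) I := hy₁.deriv_of_isOpen hI (by norm_num)
  have hy₃ : ContDiffOn ℝ 1 (deriv (deriv (deriv y))) I := hy₂.deriv_of_isOpen hI (by norm_num)
  have hu : ContDiffOn ℝ 3 (fun t => t * y t * deriv y t) I :=
    (contDiffOn_id.mul (hy.of_le (by norm_num))).mul hy₁
  have hd₀ (x) (hx : x ∈ I) : HasDerivAt y (deriv y x) x :=
    hy.hasDerivAt_of_isOpen hI (by norm_num) hx
  rw [← exists_quadratic_mul_mul_deriv_iff_exists_sq_eq hI hIconn hIpos hd₀,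
    ← deriv_deriv_deriv_eq_zero_iff_exists_quadratic hI hIconn hu]
  refine forall₂_congr fun x hx => ?_
  rw [deriv_deriv_deriv_mul_mul_eq hI hd₀
    (fun x hx => hy₁.hasDerivAt_of_isOpen hI (by norm_num) hx)
    (fun x hx => hy₂.hasDerivAt_of_isOpen hI (by norm_num) hx)
    (fun x hx => hy₃.hasDerivAt_of_isOpen hI (by norm_num) hx) hx]
end

section
/- Let I ⊆ ℝ be an open interval and let y : I → ℝ be four times continuously differentiable with y(x) ≠ 0 for all x ∈ I. Then y satisfies y(x)³·y''''(x) − 4·y(x)²·y'(x)·y'''(x) − 3·y(x)²·(y''(x))² + 12·y(x)·(y'(x))²·y''(x) − 6·(y'(x))⁴ = 0 at every x ∈ I if and only if there exist real constants c₀, c₁, c₂ such that y'(x) = (c₀ + c₁·x + c₂·x²)·y(x) for all x ∈ I. -/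
/-!
Writing `y' = u y`, the product rule gives `y⁽ᵏ⁾ = Pₖ y` with `P₁ = u` and
`Pₖ₊₁ = Pₖ' + Pₖ u`. Substituting `P₁, …, P₄` into the left-hand side of the equation,
everything cancels except `y⁴ u'''`. As `y` does not vanish, the equation is `u''' = 0`,
and on a preconnected open set this says that `u` is a quadratic polynomial.
-/

open Set

noncomputable def fourthOrderLhs (y : ℝ → ℝ) (x : ℝ) : ℝ :=
  (y x) ^ 3 * deriv (deriv (deriv (deriv y))) x
    - 4 * (y x) ^ 2 * deriv y x * deriv (deriv (deriv y)) x
    - 3 * (y x) ^ 2 * (deriv (deriv y) x) ^ 2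
    + 12 * y x * (deriv y x) ^ 2 * deriv (deriv y) x
    - 6 * (deriv y x) ^ 4

section

variable {U : Set ℝ} {u : ℝ → ℝ}

lemma ContDiffOn.hasDerivAt_deriv {n : WithTop ℕ∞} (hU : IsOpen U) (hu : ContDiffOn ℝ n u U)
    (hn : n ≠ 0) {x : ℝ} (hx : x ∈ U) : HasDerivAt u (deriv u x) x :=
  ((hu.differentiableOn hn).differentiableAt (hU.mem_nhds hx)).hasDerivAt

lemma deriv_eqOn_mul_of_hasDerivAt {y f g g' : ℝ → ℝ} (hU : IsOpen U)
    (hy : ∀ x ∈ U, HasDerivAt y (u x * y x) x) (hf : EqOn f (fun x => g x * y x) U)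
    (hg : ∀ x ∈ U, HasDerivAt g (g' x) x) :
    EqOn (deriv f) (fun x => (g' x + g x * u x) * y x) U := fun x hx => by
  rw [hf.deriv hU hx]
  exact ((hg x hx).mul (hy x hx)).deriv.trans (by ring)

lemma hasDerivAt_quadratic (c₀ c₁ c₂ x : ℝ) :
    HasDerivAt (fun x => c₀ + c₁ * x + c₂ * x ^ 2) (c₁ + 2 * c₂ * x) x :=
  ((((hasDerivAt_id x).const_mul c₁).const_add c₀).add
    ((hasDerivAt_pow 2 x).const_mul c₂)).congr_deriv (by norm_num; ring)

theorem fourthOrderLhs_eqOn {y : ℝ → ℝ} (hU : IsOpen U)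
    (hy : ∀ x ∈ U, HasDerivAt y (u x * y x) x) (hu : ContDiffOn ℝ 3 u U) :
    EqOn (fourthOrderLhs y) (fun x => y x ^ 4 * deriv (deriv (deriv u)) x) U := by
  have hu1 := hu.deriv_of_isOpen (m := 2) hU (by norm_num)
  have hu2 := hu1.deriv_of_isOpen (m := 1) hU (by norm_num)
  have d0 := fun x (hx : x ∈ U) => hu.hasDerivAt_deriv hU (by norm_num) hx
  have d1 := fun x (hx : x ∈ U) => hu1.hasDerivAt_deriv hU (by norm_num) hx
  have d2 := fun x (hx : x ∈ U) => hu2.hasDerivAt_deriv hU one_ne_zero hx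
  have h1 : EqOn (deriv y) (fun x => u x * y x) U := fun x hx => (hy x hx).deriv
  have h2 := deriv_eqOn_mul_of_hasDerivAt hU hy h1 d0
  have h3 := deriv_eqOn_mul_of_hasDerivAt hU hy h2 fun x hx =>
    (d1 x hx).add ((d0 x hx).mul (d0 x hx))
  have h4 := deriv_eqOn_mul_of_hasDerivAt hU hy h3 fun x hx =>
    ((d2 x hx).add (((d1 x hx).mul (d0 x hx)).add ((d0 x hx).mul (d1 x hx)))).add
      (((d1 x hx).add ((d0 x hx).mul (d0 x hx))).mul (d0 x hx))
  intro x hx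
  simp only [fourthOrderLhs]
  rw [h4 hx, h3 hx, h2 hx, h1 hx]
  simp only [Pi.add_apply, Pi.mul_apply]
  ring

theorem deriv_deriv_deriv_eqOn_zero_iff (hU : IsOpen U) (hU' : IsPreconnected U)
    (hu : ContDiffOn ℝ 3 u U) :
    EqOn (deriv (deriv (deriv u))) 0 U ↔
      ∃ c₀ c₁ c₂ : ℝ, EqOn u (fun x => c₀ + c₁ * x + c₂ * x ^ 2) U := by
  constructor
  · intro h
    have hu1 := hu.deriv_of_isOpen (m := 2) hU (by norm_num)
    have hu2 := hu1.deriv_of_isOpen (m := 1) hU (by norm_num)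
    obtain ⟨a, ha⟩ :=
      hU.exists_is_const_of_deriv_eq_zero hU' (hu2.differentiableOn one_ne_zero) h
    obtain ⟨b, hb⟩ := hU.exists_eq_add_of_deriv_eq (g := fun x => a * x) hU'
      (hu1.differentiableOn (by norm_num)) (by fun_prop) fun x hx => by simp [ha x hx]
    obtain ⟨c, hc⟩ := hU.exists_eq_add_of_deriv_eq (g := fun x => 0 + b * x + a / 2 * x ^ 2) hU'
      (hu.differentiableOn (by norm_num)) (by fun_prop) fun x hx => by
        rw [hb hx, (hasDerivAt_quadratic 0 b (a / 2) x).deriv]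
        ring
    exact ⟨c, b, a / 2, fun x hx => by rw [hc hx]; ring⟩
  · rintro ⟨c₀, c₁, c₂, hq⟩
    have h1 : EqOn (deriv u) (fun x => c₁ + 2 * c₂ * x) U := fun x hx => by
      rw [hq.deriv hU hx, (hasDerivAt_quadratic c₀ c₁ c₂ x).deriv]
    have h2 : EqOn (deriv (deriv u)) (fun _ => 2 * c₂) U := fun x hx => by
      rw [h1.deriv hU hx]
      simp
    intro x hx
    rw [h2.deriv hU hx]
    simp

end

/-- Example 2 of the paper: a nonvanishing `C⁴` function `y` on an open interval `I` satisfies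
`y³ y'''' − 4 y² y' y''' − 3 y² (y'')² + 12 y (y')² y'' − 6 (y')⁴ = 0` on `I` iff its
logarithmic derivative `y'/y` is a quadratic polynomial, i.e. `y' = (c₀ + c₁ x + c₂ x²) y`. -/
theorem stmt_4 (I : Set ℝ) (hI : IsOpen I) (hIconn : IsPreconnected I)
    (y : ℝ → ℝ) (hy : ContDiffOn ℝ 4 y I) (hyne : ∀ x ∈ I, y x ≠ 0) :
    (∀ x ∈ I,
        (y x) ^ 3 * deriv (deriv (deriv (deriv y))) x
          - 4 * (y x) ^ 2 * deriv y x * deriv (deriv (deriv y)) x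
          - 3 * (y x) ^ 2 * (deriv (deriv y) x) ^ 2
          + 12 * y x * (deriv y x) ^ 2 * deriv (deriv y) x
          - 6 * (deriv y x) ^ 4 = 0)
      ↔ ∃ c₀ c₁ c₂ : ℝ, ∀ x ∈ I,
          deriv y x = (c₀ + c₁ * x + c₂ * x ^ 2) * y x := by
  set u : ℝ → ℝ := fun x => deriv y x / y x
  have hy' : ∀ x ∈ I, HasDerivAt y (u x * y x) x := fun x hx => by
    rw [div_mul_cancel₀ _ (hyne x hx)]
    exact hy.hasDerivAt_deriv hI (by norm_num) hx
  have hu : ContDiffOn ℝ 3 u I :=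
    (hy.deriv_of_isOpen hI (by norm_num)).div (hy.of_le (by norm_num)) hyne
  change (∀ x ∈ I, fourthOrderLhs y x = 0) ↔ _
  calc (∀ x ∈ I, fourthOrderLhs y x = 0) ↔ EqOn (deriv (deriv (deriv u))) 0 I := by
        refine forall₂_congr fun x hx => ?_
        rw [fourthOrderLhs_eqOn hI hy' hu hx, mul_eq_zero,
          or_iff_right (pow_ne_zero 4 (hyne x hx))]
        rfl
    _ ↔ _ := deriv_deriv_deriv_eqOn_zero_iff hI hIconn hu
    _ ↔ _ := by
        refine exists₃_congr fun c₀ c₁ c₂ => forall₂_congr fun x hx => ?_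
        exact div_eq_iff (hyne x hx)
end

section
/- Let I ⊆ ℝ be an open interval and let y : I → ℝ be four times continuously differentiable with y(x) > 0 for all x ∈ I. Then y satisfies y(x)³·y''''(x) − 4·y(x)²·y'(x)·y'''(x) − 3·y(x)²·(y''(x))² + 12·y(x)·(y'(x))²·y''(x) − 6·(y'(x))⁴ = 0 at every x ∈ I if and only if there exist real constants a₀, a₁, a₂, a₃ such that y(x) = exp(a₀ + a₁·x + a₂·x² + a₃·x³) for all x ∈ I. -/
/-!
The left-hand side of the equation is `y⁴ (log y)''''`, so for positive `y` the equation says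
that `(log y)'''' = 0`. On an interval this means that `log y` is a cubic polynomial, by integrating
four times.
-/

open Finset Set

section

variable {I : Set ℝ}

theorem hasDerivAt_sum_range_mul_pow (a : ℕ → ℝ) (n : ℕ) (x : ℝ) :
    HasDerivAt (fun t => ∑ i ∈ range (n + 1), a i * t ^ i)
      (∑ i ∈ range n, (i + 1) * a (i + 1) * x ^ i) x := by
  refine (HasDerivAt.fun_sum fun i _ => (hasDerivAt_pow i x).const_mul (a i)).congr_deriv ?_
  rw [sum_range_succ']
  simp only [Nat.cast_add, Nat.cast_one, add_tsub_cancel_right, CharP.cast_eq_zero, zero_mul,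
    mul_zero, add_zero]
  exact sum_congr rfl fun i _ => by ring

theorem eqOn_deriv_of_eqOn_of_hasDerivAt (hI : IsOpen I) {f g g' : ℝ → ℝ} (hfg : EqOn f g I)
    (hg : ∀ x ∈ I, HasDerivAt g (g' x) x) : EqOn (deriv f) g' I :=
  (hfg.deriv hI).trans fun x hx => (hg x hx).deriv

theorem iterate_deriv_eqOn_zero_of_eqOn_sum_range (hI : IsOpen I) :
    ∀ {n : ℕ} {f : ℝ → ℝ} {a : ℕ → ℝ}, EqOn f (fun x => ∑ i ∈ range n, a i * x ^ i) I →
      EqOn (deriv^[n] f) 0 I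
  | 0, _, _, h => fun x hx => by simpa using h hx
  | n + 1, _, a, h => iterate_deriv_eqOn_zero_of_eqOn_sum_range hI (n := n)
      (eqOn_deriv_of_eqOn_of_hasDerivAt hI h fun x _ => hasDerivAt_sum_range_mul_pow a n x)

theorem exists_eqOn_sum_range_of_iterate_deriv_eqOn_zero (hI : IsOpen I) (hI' : IsPreconnected I) :
    ∀ {n : ℕ} {f : ℝ → ℝ}, ContDiffOn ℝ n f I → EqOn (deriv^[n] f) 0 I →
      ∃ a : ℕ → ℝ, EqOn f (fun x => ∑ i ∈ range n, a i * x ^ i) I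
  | 0, _, _, h => ⟨0, fun x hx => by simpa using h hx⟩
  | n + 1, f, hf, h => by
    obtain ⟨b, hb⟩ := exists_eqOn_sum_range_of_iterate_deriv_eqOn_zero hI hI'
      (hf.deriv_of_isOpen hI (by push_cast; rfl)) h
    let a : ℕ → ℝ := fun | 0 => 0 | i + 1 => b i / (i + 1)
    have ha : ∀ x, HasDerivAt (fun t => ∑ i ∈ range (n + 1), a i * t ^ i)
        (∑ i ∈ range n, b i * x ^ i) x := fun x => by
      convert hasDerivAt_sum_range_mul_pow a n x using 2 with i
      simp only [a]
      field_simp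
    obtain ⟨c, hc⟩ := hI.exists_eq_add_of_deriv_eq hI' (hf.differentiableOn (by simp))
      (fun x _ => (ha x).differentiableAt.differentiableWithinAt)
      (hb.trans fun x _ => (ha x).deriv.symm)
    refine ⟨fun | 0 => c | i + 1 => a (i + 1), fun x hx => ?_⟩
    simp only [hc hx, sum_range_succ' _ n, a]
    ring

theorem iterate_deriv_four_log_eqOn (hI : IsOpen I) {y : ℝ → ℝ}
    (hy : ContDiffOn ℝ 4 y I) (hy0 : ∀ x ∈ I, y x ≠ 0) :
    EqOn (deriv^[4] fun t => Real.log (y t))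
      (fun x => ((y x) ^ 3 * deriv (deriv (deriv (deriv y))) x
          - 4 * (y x) ^ 2 * deriv y x * deriv (deriv (deriv y)) x
          - 3 * (y x) ^ 2 * (deriv (deriv y) x) ^ 2
          + 12 * y x * (deriv y x) ^ 2 * deriv (deriv y) x
          - 6 * (deriv y x) ^ 4) / y x ^ 4) I := by
  have hasDerivAt_deriv {n : ℕ} {g : ℝ → ℝ} (hg : ContDiffOn ℝ (n + 1) g I) :
      ∀ x ∈ I, HasDerivAt g (deriv g x) x := fun x hx =>
    ((hg.contDiffAt (hI.mem_nhds hx)).differentiableAt (by simp)).hasDerivAt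
  have hy₁ : ContDiffOn ℝ 3 (deriv y) I := hy.deriv_of_isOpen hI (by norm_num)
  have hy₂ : ContDiffOn ℝ 2 (deriv (deriv y)) I := hy₁.deriv_of_isOpen hI (by norm_num)
  have hy₃ : ContDiffOn ℝ 1 (deriv (deriv (deriv y))) I := hy₂.deriv_of_isOpen hI (by norm_num)
  have d₀ := hasDerivAt_deriv (n := 3) hy
  have d₁ := hasDerivAt_deriv (n := 2) hy₁
  have d₂ := hasDerivAt_deriv (n := 1) hy₂
  have d₃ := hasDerivAt_deriv (n := 0) hy₃
  set y₁ := deriv y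
  set y₂ := deriv y₁
  set y₃ := deriv y₂
  have L₁ : EqOn (deriv fun t => Real.log (y t)) (fun x => y₁ x / y x) I := fun x hx =>
    ((d₀ x hx).log (hy0 x hx)).deriv
  have L₂ : EqOn (deriv^[2] fun t => Real.log (y t))
      (fun x => (y₂ x * y x - y₁ x ^ 2) / y x ^ 2) I :=
    eqOn_deriv_of_eqOn_of_hasDerivAt hI L₁ fun x hx =>
      ((d₁ x hx).div (d₀ x hx) (hy0 x hx)).congr_deriv (by field_simp)
  have L₃ : EqOn (deriv^[3] fun t => Real.log (y t))
      (fun x => (y₃ x * y x ^ 2 - 3 * y x * y₁ x * y₂ x + 2 * y₁ x ^ 3) / y x ^ 3) I :=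
    eqOn_deriv_of_eqOn_of_hasDerivAt hI L₂ fun x hx =>
      ((((d₂ x hx).fun_mul (d₀ x hx)).fun_sub ((d₁ x hx).fun_pow 2)).div ((d₀ x hx).fun_pow 2)
        (pow_ne_zero 2 (hy0 x hx))).congr_deriv (by field_simp [hy0 x hx]; ring)
  exact eqOn_deriv_of_eqOn_of_hasDerivAt hI L₃ fun x hx =>
    ((((((d₃ x hx).fun_mul ((d₀ x hx).fun_pow 2)).fun_sub
      ((((d₀ x hx).const_mul 3).fun_mul (d₁ x hx)).fun_mul (d₂ x hx))).fun_add
        (((d₁ x hx).fun_pow 3).const_mul 2))).div ((d₀ x hx).fun_pow 3)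
        (pow_ne_zero 3 (hy0 x hx))).congr_deriv (by field_simp [hy0 x hx]; ring)

end

/-- Example 2 of the paper, integrated form: a positive `C⁴` function `y` on an open interval
`I` satisfies `y³ y'''' − 4 y² y' y''' − 3 y² (y'')² + 12 y (y')² y'' − 6 (y')⁴ = 0` on `I`
iff `ln y` is a cubic polynomial, i.e. `y = exp(a₀ + a₁ x + a₂ x² + a₃ x³)` on `I`. -/
theorem stmt_5 (I : Set ℝ) (hI : IsOpen I) (hIconn : IsPreconnected I)
    (y : ℝ → ℝ) (hy : ContDiffOn ℝ 4 y I) (hypos : ∀ x ∈ I, 0 < y x) :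
    (∀ x ∈ I,
        (y x) ^ 3 * deriv (deriv (deriv (deriv y))) x
          - 4 * (y x) ^ 2 * deriv y x * deriv (deriv (deriv y)) x
          - 3 * (y x) ^ 2 * (deriv (deriv y) x) ^ 2
          + 12 * y x * (deriv y x) ^ 2 * deriv (deriv y) x
          - 6 * (deriv y x) ^ 4 = 0)
      ↔ ∃ a₀ a₁ a₂ a₃ : ℝ, ∀ x ∈ I,
          y x = Real.exp (a₀ + a₁ * x + a₂ * x ^ 2 + a₃ * x ^ 3) := by
  have hy0 : ∀ x ∈ I, y x ≠ 0 := fun x hx => (hypos x hx).ne'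
  calc _ ↔ EqOn (deriv^[4] fun t => Real.log (y t)) 0 I := forall₂_congr fun x hx => by
        rw [iterate_deriv_four_log_eqOn hI hy hy0 hx, Pi.zero_apply, div_eq_zero_iff,
          or_iff_left (pow_ne_zero 4 (hy0 x hx))]
    _ ↔ ∃ a : ℕ → ℝ, EqOn (fun t => Real.log (y t)) (fun x => ∑ i ∈ range 4, a i * x ^ i) I :=
      ⟨exists_eqOn_sum_range_of_iterate_deriv_eqOn_zero hI hIconn (hy.log hy0),
        fun ⟨_, ha⟩ => iterate_deriv_eqOn_zero_of_eqOn_sum_range hI ha⟩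
    _ ↔ _ := by
      simp only [EqOn, sum_range_succ, sum_range_zero, pow_zero, pow_one, mul_one, zero_add]
      constructor
      · rintro ⟨a, ha⟩
        exact ⟨a 0, a 1, a 2, a 3, fun x hx => by rw [← ha hx, Real.exp_log (hypos x hx)]⟩
      · rintro ⟨a₀, a₁, a₂, a₃, ha⟩
        exact ⟨fun | 0 => a₀ | 1 => a₁ | 2 => a₂ | _ => a₃, fun x hx => by simp [ha x hx]⟩
end

section
/- Let φ : ℝ² → ℝ (written φ(x,y)) be four times continuously differentiable and ψ : ℝ³ → ℝ (written ψ(x,y,p)) be four times continuously differentiable. Assume that for all (x,y,p): φ_x(x,y) + p·φ_y(x,y) ≠ 0 and ψ_p(x,y,p) ≠ 0. Then there exist continuous functions A₁, A₀, B₃, B₂, B₁, B₀ : ℝ³ → ℝ and a continuous nowhere-vanishing function c : ℝ³ → ℝ with the following property: for every open interval I, every four times continuously differentiable y : I → ℝ, and every three times continuously differentiable u : ℝ → ℝ satisfying u(φ(x, y(x))) = ψ(x, y(x), y'(x)) for all x ∈ I, one has for all x ∈ I (all coefficient functions evaluated at (x, y(x), y'(x))): u'''(φ(x, y(x))) = c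 · [ y''''(x) + (A₁·y''(x) + A₀)·y'''(x) + B₃·y''(x)³ + B₂·y''(x)² + B₁·y''(x) + B₀ ]. -/
/-!
Along the graph of `y`, the chain rule gives `(w ∘ φ)(x, y x)' = w'(φ) · K` with
`K = φ_x + y' φ_y ≠ 0`, and the derivative of any coefficient `f(x, y, y')` along the curve is
`D f + y'' f_p`, where `D f = f_x + p f_y`. Differentiating `u(φ) = ψ(x, y, y')` and dividing by
`K` three times therefore gives `u' = a y'' + b`, then `u'' = α y''' + β y''² + γ y'' + δ`,
and finally `u''' = (α / K) (y'''' + …)` in the stated normal form, where `α = ψ_p / K² ≠ 0`.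
-/

open Filter Set Topology

section IterateDeriv

variable {𝕜 F : Type*} [NontriviallyNormedField 𝕜] [NormedAddCommGroup F] [NormedSpace 𝕜 F]
  {f : 𝕜 → F} {n : WithTop ℕ∞} {k : ℕ}

theorem ContDiffOn.differentiableAt_iterate_deriv {s : Set 𝕜} (hf : ContDiffOn 𝕜 n f s)
    (hs : IsOpen s) (hk : k < n) {x : 𝕜} (hx : x ∈ s) : DifferentiableAt 𝕜 (deriv^[k] f) x := by
  replace hf := hf.of_le (ENat.add_one_natCast_le_withTop_of_lt hk)
  clear hk
  induction k generalizing f with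
  | zero => exact (hf.differentiableOn (by simp)).differentiableAt (hs.mem_nhds hx)
  | succ k ih => exact ih (hf.deriv_of_isOpen hs (by push_cast; rfl))

theorem ContDiff.differentiable_iterate_deriv (hf : ContDiff 𝕜 n f) (hk : k < n) :
    Differentiable 𝕜 (deriv^[k] f) :=
  iteratedDeriv_eq_iterate (f := f) ▸ hf.differentiable_iteratedDeriv k hk

end IterateDeriv

noncomputable section

namespace TangentTransformation

/-- `f_x + p f_y` at `(x, y, p)`: the total derivative of `f(x, y, y')` without its `y'' f_p`
term. -/
def horizDeriv (f : ℝ × ℝ × ℝ → ℝ) (v : ℝ × ℝ × ℝ) : ℝ := fderiv ℝ f v (1, v.2.2, 0)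

def vertDeriv (f : ℝ × ℝ × ℝ → ℝ) (v : ℝ × ℝ × ℝ) : ℝ := fderiv ℝ f v (0, 0, 1)

/-- `φ_x + p φ_y` at `(x, y, p)`, i.e. `dt/dx` for `t = φ(x, y(x))`. -/
def graphDeriv (φ : ℝ × ℝ → ℝ) (v : ℝ × ℝ × ℝ) : ℝ := fderiv ℝ φ (v.1, v.2.1) (1, v.2.2)

abbrev oneJet (y : ℝ → ℝ) (x : ℝ) : ℝ × ℝ × ℝ := (x, y x, deriv y x)

section Regularity

variable {f : ℝ × ℝ × ℝ → ℝ} {m n : WithTop ℕ∞}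

theorem contDiff_horizDeriv (hf : ContDiff ℝ n f) (hmn : m + 1 ≤ n) :
    ContDiff ℝ m (horizDeriv f) :=
  (hf.fderiv_right hmn).clm_apply
    (contDiff_const.prodMk ((contDiff_snd.comp contDiff_snd).prodMk contDiff_const))

theorem contDiff_vertDeriv (hf : ContDiff ℝ n f) (hmn : m + 1 ≤ n) :
    ContDiff ℝ m (vertDeriv f) :=
  (hf.fderiv_right hmn).clm_apply contDiff_const

theorem contDiff_graphDeriv {φ : ℝ × ℝ → ℝ} (hφ : ContDiff ℝ n φ) (hmn : m + 1 ≤ n) :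
    ContDiff ℝ m (graphDeriv φ) :=
  ((hφ.fderiv_right hmn).comp (contDiff_fst.prodMk (contDiff_fst.comp contDiff_snd))).clm_apply
    (contDiff_const.prodMk (contDiff_snd.comp contDiff_snd))

theorem contDiff_div_graphDeriv {φ : ℝ × ℝ → ℝ} {k : WithTop ℕ∞} (hf : ContDiff ℝ n f)
    (hφ : ContDiff ℝ k φ) (hnk : n + 1 ≤ k) (hK : ∀ v, graphDeriv φ v ≠ 0) :
    ContDiff ℝ n (f / graphDeriv φ) :=
  hf.div (contDiff_graphDeriv hφ hnk) hK

end Regularity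

theorem graphDeriv_eq {φ : ℝ × ℝ → ℝ} (hφ : Differentiable ℝ φ) (v : ℝ × ℝ × ℝ) :
    graphDeriv φ v =
      deriv (fun t => φ (t, v.2.1)) v.1 + v.2.2 * deriv (fun t => φ (v.1, t)) v.2.1 := by
  have hx : HasDerivAt (fun t => φ (t, v.2.1)) (fderiv ℝ φ (v.1, v.2.1) (1, 0)) v.1 :=
    (hφ _).hasFDerivAt.comp_hasDerivAt v.1 ((hasDerivAt_id v.1).prodMk (hasDerivAt_const _ _))
  have hy : HasDerivAt (fun t => φ (v.1, t)) (fderiv ℝ φ (v.1, v.2.1) (0, 1)) v.2.1 :=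
    (hφ _).hasFDerivAt.comp_hasDerivAt v.2.1 ((hasDerivAt_const _ _).prodMk (hasDerivAt_id _))
  rw [graphDeriv, hx.deriv, hy.deriv, ← smul_eq_mul, ← map_smul, ← map_add]
  simp

theorem vertDeriv_eq {f : ℝ × ℝ × ℝ → ℝ} (hf : Differentiable ℝ f) (v : ℝ × ℝ × ℝ) :
    vertDeriv f v = deriv (fun p => f (v.1, v.2.1, p)) v.2.2 :=
  ((hf _).hasFDerivAt.comp_hasDerivAt v.2.2 ((hasDerivAt_const _ v.1).prodMk
    ((hasDerivAt_const _ v.2.1).prodMk (hasDerivAt_id v.2.2)))).deriv.symm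

theorem hasDerivAt_comp_oneJet {f : ℝ × ℝ × ℝ → ℝ} {y : ℝ → ℝ} {x : ℝ}
    (hf : DifferentiableAt ℝ f (oneJet y x)) (hy : DifferentiableAt ℝ y x)
    (hy' : DifferentiableAt ℝ (deriv y) x) :
    HasDerivAt (fun t => f (oneJet y t))
      (horizDeriv f (oneJet y x) + deriv (deriv y) x * vertDeriv f (oneJet y x)) x := by
  have h : HasDerivAt (fun t => f (oneJet y t))
      (fderiv ℝ f (oneJet y x) (1, deriv y x, deriv (deriv y) x)) x :=
    hf.hasFDerivAt.comp_hasDerivAt x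
      ((hasDerivAt_id x).prodMk (hy.hasDerivAt.prodMk hy'.hasDerivAt))
  convert h using 1
  rw [horizDeriv, vertDeriv, ← smul_eq_mul, ← map_smul, ← map_add]
  simp

theorem hasDerivAt_comp_graph {φ : ℝ × ℝ → ℝ} {w y : ℝ → ℝ} {x : ℝ}
    (hw : DifferentiableAt ℝ w (φ (x, y x))) (hφ : DifferentiableAt ℝ φ (x, y x))
    (hy : DifferentiableAt ℝ y x) :
    HasDerivAt (fun t => w (φ (t, y t))) (deriv w (φ (x, y x)) * graphDeriv φ (oneJet y x)) x :=
  hw.hasDerivAt.comp x (hφ.hasFDerivAt.comp_hasDerivAt x ((hasDerivAt_id x).prodMk hy.hasDerivAt))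

theorem deriv_eq_div_graphDeriv_of_eventuallyEq {φ : ℝ × ℝ → ℝ} {w y F : ℝ → ℝ} {x F' : ℝ}
    (hw : DifferentiableAt ℝ w (φ (x, y x))) (hφ : DifferentiableAt ℝ φ (x, y x))
    (hy : DifferentiableAt ℝ y x) (hK : graphDeriv φ (oneJet y x) ≠ 0)
    (heq : (fun t => w (φ (t, y t))) =ᶠ[𝓝 x] F) (hF : HasDerivAt F F' x) :
    deriv w (φ (x, y x)) = F' / graphDeriv φ (oneJet y x) := by
  rw [eq_div_iff hK]
  exact (hasDerivAt_comp_graph hw hφ hy).unique (hF.congr_of_eventuallyEq heq)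

theorem eqOn_deriv_of_eqOn_comp_oneJet {φ : ℝ × ℝ → ℝ} {ψ : ℝ × ℝ × ℝ → ℝ} {w y : ℝ → ℝ}
    {I : Set ℝ} (hφ : Differentiable ℝ φ) (hK : ∀ v, graphDeriv φ v ≠ 0)
    (hψ : Differentiable ℝ ψ) (hw : Differentiable ℝ w) (hy : ContDiffOn ℝ 2 y I)
    (hI : IsOpen I) (heq : EqOn (fun t => w (φ (t, y t))) (fun t => ψ (oneJet y t)) I) :
    EqOn (fun t => deriv w (φ (t, y t)))
      (fun t => (vertDeriv ψ / graphDeriv φ) (oneJet y t) * deriv (deriv y) t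
        + (horizDeriv ψ / graphDeriv φ) (oneJet y t)) I := by
  intro x hx
  dsimp only
  have hy₀ : DifferentiableAt ℝ y x := hy.differentiableAt_iterate_deriv hI (k := 0) (by simp) hx
  have hy₁ : DifferentiableAt ℝ (deriv y) x :=
    hy.differentiableAt_iterate_deriv hI (k := 1) (by simp) hx
  rw [deriv_eq_div_graphDeriv_of_eventuallyEq (hw _) (hφ _) hy₀ (hK _)
    (eventuallyEq_of_mem (hI.mem_nhds hx) heq) (hasDerivAt_comp_oneJet (hψ _) hy₀ hy₁)]
  simp only [Pi.div_apply]
  field_simp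
  ring

theorem eqOn_deriv_of_eqOn_affine_secondDeriv {φ : ℝ × ℝ → ℝ} {a b : ℝ × ℝ × ℝ → ℝ}
    {w y : ℝ → ℝ} {I : Set ℝ} (hφ : Differentiable ℝ φ) (hK : ∀ v, graphDeriv φ v ≠ 0)
    (ha : Differentiable ℝ a) (hb : Differentiable ℝ b) (hw : Differentiable ℝ w)
    (hy : ContDiffOn ℝ 3 y I) (hI : IsOpen I)
    (heq : EqOn (fun t => w (φ (t, y t)))
      (fun t => a (oneJet y t) * deriv (deriv y) t + b (oneJet y t)) I) :
    EqOn (fun t => deriv w (φ (t, y t)))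
      (fun t => (a / graphDeriv φ) (oneJet y t) * deriv (deriv (deriv y)) t
        + (vertDeriv a / graphDeriv φ) (oneJet y t) * deriv (deriv y) t ^ 2
        + ((horizDeriv a + vertDeriv b) / graphDeriv φ) (oneJet y t) * deriv (deriv y) t
        + (horizDeriv b / graphDeriv φ) (oneJet y t)) I := by
  intro x hx
  dsimp only
  have hy₀ : DifferentiableAt ℝ y x := hy.differentiableAt_iterate_deriv hI (k := 0) (by simp) hx
  have hy₁ : DifferentiableAt ℝ (deriv y) x :=
    hy.differentiableAt_iterate_deriv hI (k := 1) (by simp) hx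
  have hy₂ : DifferentiableAt ℝ (deriv (deriv y)) x :=
    hy.differentiableAt_iterate_deriv hI (k := 2) (by norm_num) hx
  have hF := ((hasDerivAt_comp_oneJet (ha _) hy₀ hy₁).mul hy₂.hasDerivAt).add
    (hasDerivAt_comp_oneJet (hb _) hy₀ hy₁)
  rw [deriv_eq_div_graphDeriv_of_eventuallyEq (hw _) (hφ _) hy₀ (hK _)
    (eventuallyEq_of_mem (hI.mem_nhds hx) heq) hF]
  simp only [Pi.div_apply, Pi.add_apply]
  field_simp
  ring

theorem eqOn_deriv_of_eqOn_affine_thirdDeriv {φ : ℝ × ℝ → ℝ} {α β γ δ : ℝ × ℝ × ℝ → ℝ}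
    {w y : ℝ → ℝ} {I : Set ℝ} (hφ : Differentiable ℝ φ) (hK : ∀ v, graphDeriv φ v ≠ 0)
    (hα : Differentiable ℝ α) (hα₀ : ∀ v, α v ≠ 0) (hβ : Differentiable ℝ β)
    (hγ : Differentiable ℝ γ) (hδ : Differentiable ℝ δ) (hw : Differentiable ℝ w)
    (hy : ContDiffOn ℝ 4 y I) (hI : IsOpen I)
    (heq : EqOn (fun t => w (φ (t, y t)))
      (fun t => α (oneJet y t) * deriv (deriv (deriv y)) t
        + β (oneJet y t) * deriv (deriv y) t ^ 2 + γ (oneJet y t) * deriv (deriv y) t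
        + δ (oneJet y t)) I) :
    EqOn (fun t => deriv w (φ (t, y t)))
      (fun t => (α / graphDeriv φ) (oneJet y t) *
        (deriv (deriv (deriv (deriv y))) t
          + (((vertDeriv α + 2 * β) / α) (oneJet y t) * deriv (deriv y) t
            + ((horizDeriv α + γ) / α) (oneJet y t)) * deriv (deriv (deriv y)) t
          + (vertDeriv β / α) (oneJet y t) * deriv (deriv y) t ^ 3
          + ((horizDeriv β + vertDeriv γ) / α) (oneJet y t) * deriv (deriv y) t ^ 2
          + ((horizDeriv γ + vertDeriv δ) / α) (oneJet y t) * deriv (deriv y) t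
          + (horizDeriv δ / α) (oneJet y t))) I := by
  intro x hx
  dsimp only
  have hy₀ : DifferentiableAt ℝ y x := hy.differentiableAt_iterate_deriv hI (k := 0) (by simp) hx
  have hy₁ : DifferentiableAt ℝ (deriv y) x :=
    hy.differentiableAt_iterate_deriv hI (k := 1) (by simp) hx
  have hy₂ : DifferentiableAt ℝ (deriv (deriv y)) x :=
    hy.differentiableAt_iterate_deriv hI (k := 2) (by norm_num) hx
  have hy₃ : DifferentiableAt ℝ (deriv (deriv (deriv y))) x :=
    hy.differentiableAt_iterate_deriv hI (k := 3) (by norm_num) hx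
  have hF := ((((hasDerivAt_comp_oneJet (hα _) hy₀ hy₁).mul hy₃.hasDerivAt).add
    ((hasDerivAt_comp_oneJet (hβ _) hy₀ hy₁).mul (hy₂.hasDerivAt.mul hy₂.hasDerivAt))).add
    ((hasDerivAt_comp_oneJet (hγ _) hy₀ hy₁).mul hy₂.hasDerivAt)).add
    (hasDerivAt_comp_oneJet (hδ _) hy₀ hy₁)
  simp only [← sq] at hF
  rw [deriv_eq_div_graphDeriv_of_eventuallyEq (hw _) (hφ _) hy₀ (hK _)
    (eventuallyEq_of_mem (hI.mem_nhds hx) heq) hF]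
  have hαx := hα₀ (oneJet y x)
  simp only [Pi.div_apply, Pi.add_apply, Pi.mul_apply, Pi.pow_apply, Pi.ofNat_apply]
  field_simp
  ring

theorem exists_coeffs_deriv_eq_of_eqOn_affine_thirdDeriv {φ : ℝ × ℝ → ℝ}
    {α β γ δ : ℝ × ℝ × ℝ → ℝ} (hφ : ContDiff ℝ 1 φ) (hK : ∀ v, graphDeriv φ v ≠ 0)
    (hα : ContDiff ℝ 1 α) (hα₀ : ∀ v, α v ≠ 0) (hβ : ContDiff ℝ 1 β) (hγ : ContDiff ℝ 1 γ)
    (hδ : ContDiff ℝ 1 δ) :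
    ∃ A₁ A₀ B₃ B₂ B₁ B₀ c : ℝ × ℝ × ℝ → ℝ,
      Continuous A₁ ∧ Continuous A₀ ∧ Continuous B₃ ∧ Continuous B₂ ∧ Continuous B₁ ∧
      Continuous B₀ ∧ Continuous c ∧ (∀ v, c v ≠ 0) ∧
      ∀ I : Set ℝ, IsOpen I → ∀ y : ℝ → ℝ, ContDiffOn ℝ 4 y I →
        ∀ w : ℝ → ℝ, Differentiable ℝ w →
          EqOn (fun t => w (φ (t, y t)))
            (fun t => α (oneJet y t) * deriv (deriv (deriv y)) t
              + β (oneJet y t) * deriv (deriv y) t ^ 2 + γ (oneJet y t) * deriv (deriv y) t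
              + δ (oneJet y t)) I →
          ∀ x ∈ I, deriv w (φ (x, y x)) = c (oneJet y x) *
            (deriv (deriv (deriv (deriv y))) x
              + (A₁ (oneJet y x) * deriv (deriv y) x + A₀ (oneJet y x))
                * deriv (deriv (deriv y)) x
              + B₃ (oneJet y x) * deriv (deriv y) x ^ 3
              + B₂ (oneJet y x) * deriv (deriv y) x ^ 2
              + B₁ (oneJet y x) * deriv (deriv y) x + B₀ (oneJet y x)) := by
  have hD {f : ℝ × ℝ × ℝ → ℝ} (hf : ContDiff ℝ 1 f) :
      Continuous (horizDeriv f) ∧ Continuous (vertDeriv f) :=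
    ⟨(contDiff_horizDeriv hf (by norm_num) (m := 0)).continuous,
      (contDiff_vertDeriv hf (by norm_num) (m := 0)).continuous⟩
  refine ⟨(vertDeriv α + 2 * β) / α, (horizDeriv α + γ) / α, vertDeriv β / α,
    (horizDeriv β + vertDeriv γ) / α, (horizDeriv γ + vertDeriv δ) / α, horizDeriv δ / α,
    α / graphDeriv φ, ?_, ?_, ?_, ?_, ?_, ?_, ?_, fun v => div_ne_zero (hα₀ v) (hK v),
    fun I hI y hy w hw heq x hx => eqOn_deriv_of_eqOn_affine_thirdDeriv
      (hφ.differentiable one_ne_zero) hK (hα.differentiable one_ne_zero) hα₀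
      (hβ.differentiable one_ne_zero) (hγ.differentiable one_ne_zero)
      (hδ.differentiable one_ne_zero) hw hy hI heq hx⟩
  · exact ((hD hα).2.add (continuous_const.mul hβ.continuous)).div hα.continuous hα₀
  · exact ((hD hα).1.add hγ.continuous).div hα.continuous hα₀
  · exact (hD hβ).2.div hα.continuous hα₀
  · exact ((hD hβ).1.add (hD hγ).2).div hα.continuous hα₀
  · exact ((hD hγ).1.add (hD hδ).2).div hα.continuous hα₀
  · exact (hD hδ).1.div hα.continuous hα₀
  · exact hα.continuous.div (contDiff_graphDeriv hφ (m := 0) (by norm_num)).continuous hK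

end TangentTransformation

end

open TangentTransformation

/-- Case (a) of Theorem 1 of the paper: for a tangent transformation `t = φ(x,y)`,
`u = ψ(x,y,p)` with `φ_x + p φ_y ≠ 0` and `ψ_p ≠ 0`, the pullback of `u''' = 0` has the
form `c · (y'''' + (A₁ y'' + A₀) y''' + B₃ (y'')³ + B₂ (y'')² + B₁ y'' + B₀)` with
coefficients depending only on `(x, y, y')` and `c` nowhere vanishing. -/
theorem stmt_7 (φ : ℝ × ℝ → ℝ) (hφ : ContDiff ℝ 4 φ)
    (ψ : ℝ × ℝ × ℝ → ℝ) (hψ : ContDiff ℝ 4 ψ)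
    (hφk : ∀ v : ℝ × ℝ × ℝ,
      deriv (fun t => φ (t, v.2.1)) v.1 + v.2.2 * deriv (fun t => φ (v.1, t)) v.2.1 ≠ 0)
    (hψp : ∀ v : ℝ × ℝ × ℝ, deriv (fun p => ψ (v.1, v.2.1, p)) v.2.2 ≠ 0) :
    ∃ A₁ A₀ B₃ B₂ B₁ B₀ c : ℝ × ℝ × ℝ → ℝ,
      Continuous A₁ ∧ Continuous A₀ ∧ Continuous B₃ ∧ Continuous B₂ ∧ Continuous B₁ ∧
      Continuous B₀ ∧ Continuous c ∧ (∀ v : ℝ × ℝ × ℝ, c v ≠ 0) ∧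
      ∀ (I : Set ℝ), IsOpen I → IsPreconnected I →
        ∀ (y : ℝ → ℝ), ContDiffOn ℝ 4 y I →
          ∀ (u : ℝ → ℝ), ContDiff ℝ 3 u →
            (∀ x ∈ I, u (φ (x, y x)) = ψ (x, y x, deriv y x)) →
            ∀ x ∈ I,
              deriv (deriv (deriv u)) (φ (x, y x)) =
                c (x, y x, deriv y x) *
                  (deriv (deriv (deriv (deriv y))) x
                    + (A₁ (x, y x, deriv y x) * deriv (deriv y) x
                        + A₀ (x, y x, deriv y x)) * deriv (deriv (deriv y)) x
                    + B₃ (x, y x, deriv y x) * (deriv (deriv y) x) ^ 3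
                    + B₂ (x, y x, deriv y x) * (deriv (deriv y) x) ^ 2
                    + B₁ (x, y x, deriv y x) * deriv (deriv y) x
                    + B₀ (x, y x, deriv y x)) := by
  have hφ₁ : Differentiable ℝ φ := hφ.differentiable (by norm_num)
  have hψ₁ : Differentiable ℝ ψ := hψ.differentiable (by norm_num)
  have hK : ∀ v, graphDeriv φ v ≠ 0 := fun v => graphDeriv_eq hφ₁ v ▸ hφk v
  have hψ₀ : ∀ v, vertDeriv ψ v ≠ 0 := fun v => vertDeriv_eq hψ₁ v ▸ hψp v
  have ha : ContDiff ℝ 2 (vertDeriv ψ / graphDeriv φ) :=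
    contDiff_div_graphDeriv (contDiff_vertDeriv hψ (by norm_num)) hφ (by norm_num) hK
  have hb : ContDiff ℝ 2 (horizDeriv ψ / graphDeriv φ) :=
    contDiff_div_graphDeriv (contDiff_horizDeriv hψ (by norm_num)) hφ (by norm_num) hK
  obtain ⟨A₁, A₀, B₃, B₂, B₁, B₀, c, hA₁, hA₀, hB₃, hB₂, hB₁, hB₀, hc, hc₀, hnormal⟩ :=
    exists_coeffs_deriv_eq_of_eqOn_affine_thirdDeriv (hφ.of_le (by norm_num)) hK
      (contDiff_div_graphDeriv (ha.of_le (by norm_num)) hφ (by norm_num) hK)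
      (fun v => div_ne_zero (div_ne_zero (hψ₀ v) (hK v)) (hK v))
      (contDiff_div_graphDeriv (contDiff_vertDeriv ha (by norm_num)) hφ (by norm_num) hK)
      (contDiff_div_graphDeriv ((contDiff_horizDeriv ha (by norm_num)).add
        (contDiff_vertDeriv hb (by norm_num))) hφ (by norm_num) hK)
      (contDiff_div_graphDeriv (contDiff_horizDeriv hb (by norm_num)) hφ (by norm_num) hK)
  refine ⟨A₁, A₀, B₃, B₂, B₁, B₀, c, hA₁, hA₀, hB₃, hB₂, hB₁, hB₀, hc, hc₀, ?_⟩
  intro I hI _ y hy u hu hequ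
  have hu₀ : Differentiable ℝ u := hu.differentiable (by norm_num)
  have hu₁ : Differentiable ℝ (deriv u) := hu.differentiable_iterate_deriv (k := 1) (by norm_num)
  have hu₂ : Differentiable ℝ (deriv (deriv u)) :=
    hu.differentiable_iterate_deriv (k := 2) (by norm_num)
  have hfirst := eqOn_deriv_of_eqOn_comp_oneJet hφ₁ hK hψ₁ hu₀ (hy.of_le (by norm_num)) hI hequ
  exact hnormal I hI y hy _ hu₂ (eqOn_deriv_of_eqOn_affine_secondDeriv hφ₁ hK
    (ha.differentiable (by norm_num)) (hb.differentiable (by norm_num)) hu₁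
    (hy.of_le (by norm_num)) hI hfirst)
end

section
/- Let φ : ℝ² → ℝ (written φ(x,y)) be twice continuously differentiable. Define k : ℝ³ → ℝ by k(x,y,p) = φ_x(x,y) + p·φ_y(x,y), suppose k ≠ 0 on an open set U ⊆ ℝ³, and define λ : U → ℝ by λ(x,y,p) = φ_y(x,y)/k(x,y,p). Then for all (x,y,p) ∈ U: λ·k_x + (p·λ − 1)·k_y + (λ_x + p·λ_y)·k = 0, where k_x, k_y, λ_x, λ_y denote the partial derivatives of k and λ (as functions of (x,y,p)) with respect to x and y. -/
/-!
Differentiating `λ k = φ_y` gives `λ_x k = φ_yx - λ k_x` and `λ_y k = φ_yy - λ k_y`. Substituting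
these, the left-hand side collapses to `φ_yx + p φ_yy - k_y = φ_yx - φ_xy`, which vanishes by the
symmetry of second derivatives of a `C²` function.
-/

open Topology

noncomputable def partialFst (f : ℝ × ℝ → ℝ) (q : ℝ × ℝ) : ℝ := deriv (fun t => f (t, q.2)) q.1

noncomputable def partialSnd (f : ℝ × ℝ → ℝ) (q : ℝ × ℝ) : ℝ := deriv (fun t => f (q.1, t)) q.2

section Partials

variable {f : ℝ × ℝ → ℝ} {x y : ℝ}

theorem HasFDerivAt.hasDerivAt_partialFst {f' : ℝ × ℝ →L[ℝ] ℝ} (hf : HasFDerivAt f f' (x, y)) :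
    HasDerivAt (fun t => f (t, y)) (f' (1, 0)) x :=
  hf.comp_hasDerivAt x ((hasDerivAt_id x).prodMk (hasDerivAt_const x y))

theorem HasFDerivAt.hasDerivAt_partialSnd {f' : ℝ × ℝ →L[ℝ] ℝ} (hf : HasFDerivAt f f' (x, y)) :
    HasDerivAt (fun t => f (x, t)) (f' (0, 1)) y :=
  hf.comp_hasDerivAt y ((hasDerivAt_const y x).prodMk (hasDerivAt_id y))

theorem DifferentiableAt.partialFst_eq (hf : DifferentiableAt ℝ f (x, y)) :
    partialFst f (x, y) = fderiv ℝ f (x, y) (1, 0) :=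
  hf.hasFDerivAt.hasDerivAt_partialFst.deriv

theorem DifferentiableAt.partialSnd_eq (hf : DifferentiableAt ℝ f (x, y)) :
    partialSnd f (x, y) = fderiv ℝ f (x, y) (0, 1) :=
  hf.hasFDerivAt.hasDerivAt_partialSnd.deriv

theorem DifferentiableAt.hasDerivAt_partialFst (hf : DifferentiableAt ℝ f (x, y)) :
    HasDerivAt (fun t => f (t, y)) (partialFst f (x, y)) x := by
  rw [hf.partialFst_eq]
  exact hf.hasFDerivAt.hasDerivAt_partialFst

theorem DifferentiableAt.hasDerivAt_partialSnd (hf : DifferentiableAt ℝ f (x, y)) :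
    HasDerivAt (fun t => f (x, t)) (partialSnd f (x, y)) y := by
  rw [hf.partialSnd_eq]
  exact hf.hasFDerivAt.hasDerivAt_partialSnd

theorem Differentiable.partialFst_eq_fderiv (hf : Differentiable ℝ f) :
    partialFst f = fun q => fderiv ℝ f q (1, 0) :=
  funext fun _ => (hf _).partialFst_eq

theorem Differentiable.partialSnd_eq_fderiv (hf : Differentiable ℝ f) :
    partialSnd f = fun q => fderiv ℝ f q (0, 1) :=
  funext fun _ => (hf _).partialSnd_eq

theorem ContDiff.contDiff_partialFst {n : ℕ} (hf : ContDiff ℝ (n + 1) f) :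
    ContDiff ℝ n (partialFst f) := by
  rw [(hf.differentiable (by simp)).partialFst_eq_fderiv]
  exact (hf.fderiv_right le_rfl).clm_apply contDiff_const

theorem ContDiff.contDiff_partialSnd {n : ℕ} (hf : ContDiff ℝ (n + 1) f) :
    ContDiff ℝ n (partialSnd f) := by
  rw [(hf.differentiable (by simp)).partialSnd_eq_fderiv]
  exact (hf.fderiv_right le_rfl).clm_apply contDiff_const

theorem ContDiff.partialSnd_partialFst (hf : ContDiff ℝ 2 f) (q : ℝ × ℝ) :
    partialSnd (partialFst f) q = partialFst (partialSnd f) q := by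
  have hf' : Differentiable ℝ (fderiv ℝ f) :=
    (hf.fderiv_right (m := 1) le_rfl).differentiable one_ne_zero
  have hf1 : Differentiable ℝ f := hf.differentiable (by simp)
  obtain ⟨x, y⟩ := q
  rw [hf1.partialFst_eq_fderiv, hf1.partialSnd_eq_fderiv,
    ((hf' _).clm_apply (differentiableAt_const _)).partialSnd_eq,
    ((hf' _).clm_apply (differentiableAt_const _)).partialFst_eq,
    fderiv_clm_apply (hf' _) (differentiableAt_const _),
    fderiv_clm_apply (hf' _) (differentiableAt_const _)]
  simpa using (hf.contDiffAt.isSymmSndFDerivAt (by simp)) (0, 1) (1, 0)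

end Partials

theorem deriv_mul_eq_of_eventuallyEq_div {f g h : ℝ → ℝ} {x : ℝ}
    (hfgh : f =ᶠ[𝓝 x] fun t => g t / h t) (hg : DifferentiableAt ℝ g x)
    (hh : DifferentiableAt ℝ h x) (hx : h x ≠ 0) :
    deriv f x * h x = deriv g x - f x * deriv h x := by
  rw [hfgh.deriv_eq, hfgh.eq_of_nhds, deriv_fun_div hg hh hx]
  field_simp

/-- Equation (16) of the paper: with `k = φ_x + p φ_y` nonvanishing on an open set `U` and
`λ = φ_y / k`, one has `λ k_x + (p λ − 1) k_y + (λ_x + p λ_y) k = 0` on `U`. -/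
theorem stmt_12 (φ : ℝ × ℝ → ℝ) (hφ : ContDiff ℝ 2 φ)
    (k : ℝ × ℝ × ℝ → ℝ)
    (hk : ∀ v : ℝ × ℝ × ℝ,
      k v = deriv (fun t => φ (t, v.2.1)) v.1 + v.2.2 * deriv (fun t => φ (v.1, t)) v.2.1)
    (U : Set (ℝ × ℝ × ℝ)) (hU : IsOpen U) (hkne : ∀ v ∈ U, k v ≠ 0)
    (lam : ℝ × ℝ × ℝ → ℝ)
    (hlam : ∀ v ∈ U, lam v = deriv (fun t => φ (v.1, t)) v.2.1 / k v) :
    ∀ v ∈ U,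
      lam v * deriv (fun t => k (t, v.2.1, v.2.2)) v.1
        + (v.2.2 * lam v - 1) * deriv (fun t => k (v.1, t, v.2.2)) v.2.1
        + (deriv (fun t => lam (t, v.2.1, v.2.2)) v.1
            + v.2.2 * deriv (fun t => lam (v.1, t, v.2.2)) v.2.1) * k v = 0 := by
  rintro ⟨x, y, p⟩ hv
  have hφx : Differentiable ℝ (partialFst φ) :=
    (hφ.contDiff_partialFst (n := 1)).differentiable one_ne_zero
  have hφy : Differentiable ℝ (partialSnd φ) :=
    (hφ.contDiff_partialSnd (n := 1)).differentiable one_ne_zero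
  have hkx : HasDerivAt (fun t => k (t, y, p))
      (partialFst (partialFst φ) (x, y) + p * partialFst (partialSnd φ) (x, y)) x :=
    ((hφx _).hasDerivAt_partialFst.fun_add
      ((hφy _).hasDerivAt_partialFst.const_mul p)).congr_of_eventuallyEq (.of_forall fun _ => hk _)
  have hky : HasDerivAt (fun t => k (x, t, p))
      (partialSnd (partialFst φ) (x, y) + p * partialSnd (partialSnd φ) (x, y)) y :=
    ((hφx _).hasDerivAt_partialSnd.fun_add
      ((hφy _).hasDerivAt_partialSnd.const_mul p)).congr_of_eventuallyEq (.of_forall fun _ => hk _)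
  have hlam_x : deriv (fun t => lam (t, y, p)) x * k (x, y, p)
      = partialFst (partialSnd φ) (x, y) - lam (x, y, p) * deriv (fun t => k (t, y, p)) x := by
    refine deriv_mul_eq_of_eventuallyEq_div (g := fun t => partialSnd φ (t, y)) ?_
      (hφy _).hasDerivAt_partialFst.differentiableAt hkx.differentiableAt (hkne _ hv)
    have hcont : Continuous fun t : ℝ => (t, y, p) := by fun_prop
    filter_upwards [hcont.continuousAt.eventually_mem (hU.mem_nhds hv)] with t ht
    exact hlam _ ht
  have hlam_y : deriv (fun t => lam (x, t, p)) y * k (x, y, p)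
      = partialSnd (partialSnd φ) (x, y) - lam (x, y, p) * deriv (fun t => k (x, t, p)) y := by
    refine deriv_mul_eq_of_eventuallyEq_div (g := fun t => partialSnd φ (x, t)) ?_
      (hφy _).hasDerivAt_partialSnd.differentiableAt hky.differentiableAt (hkne _ hv)
    have hcont : Continuous fun t : ℝ => (x, t, p) := by fun_prop
    filter_upwards [hcont.continuousAt.eventually_mem (hU.mem_nhds hv)] with t ht
    exact hlam _ ht
  have hsym := hφ.partialSnd_partialFst (x, y)
  rw [hky.deriv] at hlam_y ⊢
  linear_combination hlam_x + p * hlam_y - hsym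
end
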